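/- Let n ∈ ℕ, let \tilde{R}_n be a symmetrized Hammersley type point set with N = 2^{n+2} points (for an arbitrary fixed choice function σ), and let D be its local discrepancy function. Then the integral of D over the unit square vanishes: ∫_0^1 ∫_0^1 D(t1,t2) dt1 dt2 = 0. -/

import Mathlib

open MeasureTheory Set

/-- The L∞-normalized Haar function `h_{j,m}` on `[0,1)`: it is `+1` on the left half
`[2m/2^{j+1}, (2m+1)/2^{j+1})` of the dyadic interval `I_{j,m}`, `-1` on the right half
`[(2m+1)/2^{j+1}, (2m+2)/2^{j+1})`, and `0` elsewhere. -/
noncomputable def haar (j m : ℕ) (t : ℝ) : ℝ :=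
  if (2 * m : ℝ) / 2 ^ (j + 1) ≤ t ∧ t < (2 * m + 1 : ℝ) / 2 ^ (j + 1) then 1
  else if (2 * m + 1 : ℝ) / 2 ^ (j + 1) ≤ t ∧ t < (2 * m + 2 : ℝ) / 2 ^ (j + 1) then -1
  else 0

/-- First coordinate of a point of the Hammersley type point set:
`t_n/2 + t_{n-1}/2^2 + ⋯ + t_1/2^n`, where the index `i : Fin n` corresponds to `t_{i+1}`,
so the digit `t i` gets divided by `2^{n - i}`. -/
noncomputable def hamX (n : ℕ) (t : Fin n → Bool) : ℝ :=
  ∑ i : Fin n, (if t i then (1 : ℝ) else 0) / 2 ^ (n - i.val)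

/-- Second coordinate of a point of the Hammersley type point set:
`s_1/2 + s_2/2^2 + ⋯ + s_n/2^n` with `s_i = t_i` if `σ i = false` and `s_i = 1 - t_i`
if `σ i = true`, i.e. `s_i = t_i XOR σ i`. -/
noncomputable def hamY (n : ℕ) (σ : Fin n → Bool) (t : Fin n → Bool) : ℝ :=
  ∑ i : Fin n, (if (t i).xor (σ i) then (1 : ℝ) else 0) / 2 ^ (i.val + 1)

/-- The points of the symmetrized Hammersley type multiset `R̃_n`, parametrized by a digit
vector `t` and two reflection bits: `(x,y)`, `(x,1-y)`, `(1-x,y)`, `(1-x,1-y)`. -/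
noncomputable def symPoint (n : ℕ) (σ : Fin n → Bool) (z : (Fin n → Bool) × Bool × Bool) :
    ℝ × ℝ :=
  (if z.2.1 then 1 - hamX n z.1 else hamX n z.1,
   if z.2.2 then 1 - hamY n σ z.1 else hamY n σ z.1)

/-- The local discrepancy function of the symmetrized Hammersley type multiset `R̃_n`
with `N = 2^{n+2}` points counted with multiplicity. -/
noncomputable def discSym (n : ℕ) (σ : Fin n → Bool) (t1 t2 : ℝ) : ℝ :=
  (∑ z : (Fin n → Bool) × Bool × Bool,
      if (symPoint n σ z).1 < t1 ∧ (symPoint n σ z).2 < t2 then (1 : ℝ) else 0) / 2 ^ (n + 2)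
    - t1 * t2

/-!
Integrating the counting function of a single point `(x, y) ∈ [0,1]²` over the unit square
gives `(1 - x)(1 - y)`, while `∫∫ t₁ t₂ = 1/4`. Hence the integral of the local discrepancy
of any `N` points of `[0,1]²` is `N⁻¹ ∑ (1 - x)(1 - y) - 1/4`. The four reflections of a
point contribute `((1 - x) + x)((1 - y) + y) = 1` to this sum, so for the `2^{n+2}` points of
`R̃_n` the sum is `2^n` and the integral vanishes.
-/

lemma ite_lt_eq_indicator (a t : ℝ) :
    (if a < t then (1 : ℝ) else 0) = (Ioi a).indicator (fun _ => 1) t := by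
  simp [indicator_apply]

lemma integrableOn_Ico_ite_lt (a : ℝ) :
    IntegrableOn (fun t : ℝ => if a < t then (1 : ℝ) else 0) (Ico 0 1) := by
  simp_rw [ite_lt_eq_indicator]
  exact (integrableOn_const measure_Ico_lt_top.ne (C := (1 : ℝ))).indicator measurableSet_Ioi

lemma setIntegral_Ico_ite_lt {a : ℝ} (ha : a ∈ Icc (0 : ℝ) 1) :
    ∫ t in Ico (0 : ℝ) 1, (if a < t then (1 : ℝ) else 0) = 1 - a := by
  have hinter : Ico (0 : ℝ) 1 ∩ Ioi a = Ioo a 1 := by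
    ext t
    exact ⟨fun ⟨⟨_, ht1⟩, hat⟩ => ⟨hat, ht1⟩, fun ⟨hat, ht1⟩ => ⟨⟨ha.1.trans hat.le, ht1⟩, hat⟩⟩
  simp_rw [ite_lt_eq_indicator]
  rw [setIntegral_indicator measurableSet_Ioi, hinter, setIntegral_const,
    Real.volume_real_Ioo_of_le ha.2]
  simp

lemma integrableOn_Ico_id : IntegrableOn (fun t : ℝ => t) (Ico 0 1) :=
  continuous_id.integrableOn_Icc.mono_set Ico_subset_Icc_self

lemma setIntegral_Ico_id : ∫ t in Ico (0 : ℝ) 1, t = 1 / 2 := by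
  rw [integral_Ico_eq_integral_Ioo, ← integral_Icc_eq_integral_Ioo, integral_Icc_eq_integral_Ioc,
    ← intervalIntegral.integral_of_le zero_le_one, integral_id]
  norm_num

lemma ite_lt_and_lt_eq_mul (a b t1 t2 : ℝ) :
    (if a < t1 ∧ b < t2 then (1 : ℝ) else 0) =
      (if a < t1 then (1 : ℝ) else 0) * (if b < t2 then (1 : ℝ) else 0) := by
  rw [ite_zero_mul_ite_zero, one_mul]

section LocalDiscrepancy

variable {ι : Type*} [Fintype ι]

noncomputable def localDisc (p : ι → ℝ × ℝ) (t1 t2 : ℝ) : ℝ :=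
  (∑ z, if (p z).1 < t1 ∧ (p z).2 < t2 then (1 : ℝ) else 0) / Fintype.card ι - t1 * t2

variable {p : ι → ℝ × ℝ}

lemma setIntegral_Ico_localDisc (hp : ∀ z, p z ∈ Icc (0 : ℝ) 1 ×ˢ Icc (0 : ℝ) 1) (t1 : ℝ) :
    ∫ t2 in Ico (0 : ℝ) 1, localDisc p t1 t2 =
      (∑ z, (if (p z).1 < t1 then (1 : ℝ) else 0) * (1 - (p z).2)) / Fintype.card ι
        - t1 / 2 := by
  unfold localDisc
  simp_rw [ite_lt_and_lt_eq_mul]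
  rw [integral_sub, integral_div, integral_finsetSum, integral_const_mul, setIntegral_Ico_id]
  · simp_rw [integral_const_mul, setIntegral_Ico_ite_lt (hp _).2]
    ring
  · exact fun z _ => (integrableOn_Ico_ite_lt _).const_mul _
  · exact (integrable_finsetSum _ fun z _ =>
      (integrableOn_Ico_ite_lt _).const_mul _).div_const _
  · exact integrableOn_Ico_id.const_mul t1

lemma setIntegral_Ico_setIntegral_Ico_localDisc
    (hp : ∀ z, p z ∈ Icc (0 : ℝ) 1 ×ˢ Icc (0 : ℝ) 1) :
    ∫ t1 in Ico (0 : ℝ) 1, ∫ t2 in Ico (0 : ℝ) 1, localDisc p t1 t2 =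
      (∑ z, (1 - (p z).1) * (1 - (p z).2)) / Fintype.card ι - 1 / 4 := by
  simp_rw [setIntegral_Ico_localDisc hp]
  rw [integral_sub, integral_div, integral_finsetSum, integral_div, setIntegral_Ico_id]
  · simp_rw [integral_mul_const, setIntegral_Ico_ite_lt (hp _).1]
    ring
  · exact fun z _ => (integrableOn_Ico_ite_lt _).mul_const _
  · exact (integrable_finsetSum _ fun z _ =>
      (integrableOn_Ico_ite_lt _).mul_const _).div_const _
  · exact integrableOn_Ico_id.div_const 2

end LocalDiscrepancy

lemma sum_ite_div_two_pow_succ_mem_Icc {n : ℕ} (d : Fin n → Bool) :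
    ∑ i : Fin n, (if d i then (1 : ℝ) else 0) / 2 ^ (i.val + 1) ∈ Icc (0 : ℝ) 1 := by
  refine ⟨Finset.sum_nonneg fun i _ => by positivity, ?_⟩
  calc ∑ i : Fin n, (if d i then (1 : ℝ) else 0) / 2 ^ (i.val + 1)
      ≤ ∑ i : Fin n, 1 / (2 : ℝ) ^ (i.val + 1) := by
        gcongr with i
        split_ifs <;> norm_num
    _ = (∑ i ∈ Finset.range n, (1 / 2 : ℝ) ^ i) / 2 := by
        rw [Fin.sum_univ_eq_sum_range (fun i => 1 / (2 : ℝ) ^ (i + 1)), Finset.sum_div]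
        exact Finset.sum_congr rfl fun i _ => by rw [one_div_pow, pow_succ, div_div]
    _ ≤ 1 := by linarith [sum_geometric_two_le n]

lemma hamX_mem_Icc (n : ℕ) (t : Fin n → Bool) : hamX n t ∈ Icc (0 : ℝ) 1 := by
  convert sum_ite_div_two_pow_succ_mem_Icc (t ∘ Fin.rev) using 1
  rw [hamX, ← Equiv.sum_comp Fin.revPerm]
  refine Finset.sum_congr rfl fun i _ => ?_
  simp only [Fin.revPerm_apply, Function.comp_apply, Fin.val_rev]
  congr 2
  omega

lemma hamY_mem_Icc (n : ℕ) (σ t : Fin n → Bool) : hamY n σ t ∈ Icc (0 : ℝ) 1 :=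
  sum_ite_div_two_pow_succ_mem_Icc _

lemma ite_one_sub_mem_Icc {x : ℝ} (hx : x ∈ Icc (0 : ℝ) 1) (b : Bool) :
    (if b then 1 - x else x) ∈ Icc (0 : ℝ) 1 := by
  cases b
  · exact hx
  · exact Icc.mem_iff_one_sub_mem.mp hx

lemma symPoint_mem (n : ℕ) (σ : Fin n → Bool) (z : (Fin n → Bool) × Bool × Bool) :
    symPoint n σ z ∈ Icc (0 : ℝ) 1 ×ˢ Icc (0 : ℝ) 1 :=
  ⟨ite_one_sub_mem_Icc (hamX_mem_Icc n z.1) _, ite_one_sub_mem_Icc (hamY_mem_Icc n σ z.1) _⟩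

lemma sum_bool_one_sub_ite_one_sub (x : ℝ) : ∑ b : Bool, (1 - if b then 1 - x else x) = 1 := by
  rw [Fintype.sum_bool]
  simp

lemma sum_symPoint_one_sub_mul_one_sub (n : ℕ) (σ : Fin n → Bool) :
    ∑ z, (1 - (symPoint n σ z).1) * (1 - (symPoint n σ z).2) = 2 ^ n := by
  have hreflections (t : Fin n → Bool) :
      ∑ b : Bool × Bool, (1 - (symPoint n σ (t, b)).1) * (1 - (symPoint n σ (t, b)).2) = 1 := by
    calc _ = (∑ b : Bool, (1 - if b then 1 - hamX n t else hamX n t)) *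
          ∑ b : Bool, (1 - if b then 1 - hamY n σ t else hamY n σ t) := by
          rw [Fintype.sum_mul_sum, Fintype.sum_prod_type]
          rfl
      _ = 1 := by rw [sum_bool_one_sub_ite_one_sub, sum_bool_one_sub_ite_one_sub, mul_one]
  rw [Fintype.sum_prod_type, Fintype.sum_congr _ _ hreflections]
  simp

/-- Proposition (vi): the integral of the local discrepancy of the symmetrized Hammersley
type multiset `R̃_n` over the unit square vanishes. -/
theorem disc_integral_zero (n : ℕ) (σ : Fin n → Bool) :
    (∫ t1 in Set.Ico (0 : ℝ) 1, ∫ t2 in Set.Ico (0 : ℝ) 1, discSym n σ t1 t2) = 0 := by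
  have hcard : (Fintype.card ((Fin n → Bool) × Bool × Bool) : ℝ) = 2 ^ (n + 2) := by
    simp [pow_succ, mul_assoc]
    norm_num
  have hdisc : discSym n σ = localDisc (symPoint n σ) := by
    funext t1 t2
    rw [discSym, localDisc, hcard]
  rw [hdisc, setIntegral_Ico_setIntegral_Ico_localDisc (symPoint_mem n σ),
    sum_symPoint_one_sub_mul_one_sub, hcard, pow_add]
  field_simp
  norm_num
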